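/- Let $f' : \mathbb{R} \to \mathbb{R}$ be continuous with $0 < \delta_0 \le f'(x) \le c_0$, let $G(x) = \int_0^x f'(v)\,dv$, and let $B \subset \mathbb{R}$ be a measurable set of finite Lebesgue measure $\lambda(B)$. Then for all $x \in \mathbb{R}$, $\left| f'(x) \int_0^x \frac{\chi_B(G(u))}{f'(u)}\,du \right| \le \frac{c_0}{\delta_0^2} \lambda(B)$. -/

import Mathlib

open MeasureTheory

/-! `G` is an increasing `C¹` bijection with `G' = f' ≥ δ₀`, so by the change of variables formula
`δ₀ λ(G⁻¹ B) ≤ ∫_{G⁻¹ B} G' = λ(G (G⁻¹ B)) ≤ λ(B)`. The integrand `χ_B(G u) / f'(u)` is at most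
`χ_{G⁻¹ B}(u) / δ₀`, so the integral is at most `λ(B) / δ₀²`, and the prefactor is at most `c₀`. -/

section

variable {G G' : ℝ → ℝ} {δ : ℝ}

lemma measurable_of_forall_hasDerivAt (hG : ∀ u, HasDerivAt G (G' u) u) : Measurable G :=
  (Differentiable.continuous (𝕜 := ℝ) fun u => (hG u).differentiableAt).measurable

lemma ofReal_mul_volume_le_volume_image (hδ : 0 < δ) (hG : ∀ u, HasDerivAt G (G' u) u)
    (hG' : ∀ u, δ ≤ G' u) {s : Set ℝ} (hs : MeasurableSet s) :
    ENNReal.ofReal δ * volume s ≤ volume (G '' s) := by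
  have hinj : Set.InjOn G s :=
    (strictMono_of_hasDerivAt_pos hG fun u => hδ.trans_le (hG' u)).injective.injOn
  calc ENNReal.ofReal δ * volume s = ∫⁻ _ in s, ENNReal.ofReal δ := by
        rw [setLIntegral_const, mul_comm]
    _ ≤ ∫⁻ u in s, ENNReal.ofReal |G' u| * 1 := by
        gcongr with u
        rw [mul_one]
        exact ENNReal.ofReal_le_ofReal ((hG' u).trans (le_abs_self _))
    _ = volume (G '' s) := by
        rw [← setLIntegral_one,
          lintegral_image_eq_lintegral_abs_deriv_mul hs (fun u _ => (hG u).hasDerivWithinAt) hinj]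

lemma volume_preimage_le_div (hδ : 0 < δ) (hG : ∀ u, HasDerivAt G (G' u) u)
    (hG' : ∀ u, δ ≤ G' u) {B : Set ℝ} (hB : MeasurableSet B) :
    volume (G ⁻¹' B) ≤ volume B / ENNReal.ofReal δ := by
  rw [ENNReal.le_div_iff_mul_le (.inl (by simpa using hδ)) (.inl ENNReal.ofReal_ne_top), mul_comm]
  exact (ofReal_mul_volume_le_volume_image hδ hG hG' (measurable_of_forall_hasDerivAt hG hB)).trans
    (measure_mono (Set.image_preimage_subset G B))

end

lemma abs_intervalIntegral_indicator_div_le {h : ℝ → ℝ} {δ : ℝ} (hδ : 0 < δ)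
    (hh : ∀ u, δ ≤ h u) {s : Set ℝ} (hs : MeasurableSet s) (hsfin : volume s ≠ ⊤) (a b : ℝ) :
    |∫ u in a..b, s.indicator (fun _ => (1 : ℝ)) u / h u| ≤ volume.real s / δ := by
  have hint : Integrable (s.indicator fun _ => δ⁻¹) :=
    (integrable_indicator_iff hs).2 (integrableOn_const hsfin)
  have hpt : ∀ u, ‖s.indicator (fun _ => (1 : ℝ)) u / h u‖ ≤ s.indicator (fun _ => δ⁻¹) u := by
    intro u
    by_cases hu : u ∈ s
    · rw [Set.indicator_of_mem hu, Set.indicator_of_mem hu, one_div, norm_inv, Real.norm_eq_abs,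
        abs_of_pos (hδ.trans_le (hh u))]
      exact inv_anti₀ hδ (hh u)
    · simp [hu]
  rw [← Real.norm_eq_abs, intervalIntegral.norm_integral_eq_norm_integral_uIoc]
  calc ‖∫ u in Set.uIoc a b, s.indicator (fun _ => (1 : ℝ)) u / h u‖
      ≤ ∫ u in Set.uIoc a b, s.indicator (fun _ => δ⁻¹) u :=
        norm_integral_le_of_norm_le hint.integrableOn (Filter.Eventually.of_forall hpt)
    _ ≤ ∫ u, s.indicator (fun _ => δ⁻¹) u :=
        setIntegral_le_integral hint (Filter.Eventually.of_forall fun u =>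
          Set.indicator_nonneg (fun _ _ => (inv_pos.2 hδ).le) u)
    _ = volume.real s / δ := by rw [integral_indicator_const _ hs, smul_eq_mul, div_eq_mul_inv]

/-- If `f'` is continuous with `0 < δ₀ ≤ f' ≤ c₀`, `G(x) = ∫₀ˣ f'`, and `B` is a
measurable set of finite Lebesgue measure, then for all `x`,
`|f'(x) ∫₀ˣ χ_B(G(u))/f'(u) du| ≤ (c₀/δ₀²) λ(B)`. -/
theorem stmt4 (f' : ℝ → ℝ) (δ₀ c₀ : ℝ) (hδ : 0 < δ₀)
    (hcont : Continuous f')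
    (hbound : ∀ x, δ₀ ≤ f' x ∧ f' x ≤ c₀)
    (G : ℝ → ℝ) (hG : ∀ x, G x = ∫ v in (0:ℝ)..x, f' v)
    (B : Set ℝ) (hB : MeasurableSet B) (hBfin : volume B < ⊤) :
    ∀ x : ℝ,
      |f' x * ∫ u in (0:ℝ)..x, Set.indicator B (fun _ => (1:ℝ)) (G u) / f' u|
        ≤ (c₀ / δ₀ ^ 2) * (volume B).toReal := by
  intro x
  have hderiv : ∀ u, HasDerivAt G (f' u) u := by
    rw [funext hG]
    exact fun u => (hcont.integral_hasStrictDerivAt 0 u).hasDerivAt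
  have hpre := volume_preimage_le_div hδ hderiv (fun u => (hbound u).1) hB
  have hfin : volume B / ENNReal.ofReal δ₀ ≠ ⊤ := ENNReal.div_ne_top hBfin.ne (by simpa using hδ)
  have hpre_real : volume.real (G ⁻¹' B) ≤ volume.real B / δ₀ := by
    simpa [measureReal_def, ENNReal.toReal_div, hδ.le] using ENNReal.toReal_mono hfin hpre
  set I := ∫ u in (0:ℝ)..x, B.indicator (fun _ => (1:ℝ)) (G u) / f' u
  -- `B.indicator 1 (G u)` is definitionally `(G ⁻¹' B).indicator 1 u`
  have hI : |I| ≤ volume.real (G ⁻¹' B) / δ₀ :=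
    abs_intervalIntegral_indicator_div_le hδ (fun u => (hbound u).1)
      (measurable_of_forall_hasDerivAt hderiv hB) (ne_top_of_le_ne_top hfin hpre) 0 x
  have hc₀ : 0 ≤ c₀ := hδ.le.trans ((hbound x).1.trans (hbound x).2)
  calc |f' x * I| = f' x * |I| := by rw [abs_mul, abs_of_pos (hδ.trans_le (hbound x).1)]
    _ ≤ c₀ * (volume.real B / δ₀ / δ₀) :=
        mul_le_mul (hbound x).2 (hI.trans (by gcongr)) (abs_nonneg _) hc₀
    _ = (c₀ / δ₀ ^ 2) * (volume B).toReal := by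
        rw [measureReal_def]
        field_simp
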